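/- Fix n ≥ 1 and define the sequence x(n) by x(n)_i = 1 if i ≡ 1 (mod n) and x(n)_i = 0 otherwise. Then ‖x(n)‖_{∞,p,n}^p = 1/n, and for every m that is not a positive multiple of n, ‖x(n)‖_{∞,p,m}^p > 1/n. -/

import Mathlib

/-!
Every window of length `n` of the comb sequence `x(n)` contains exactly one `1`, because the
sequence is `n`-periodic and its first period contains a single `1`; so all window means of
length `n` equal `1/n`. For `n ∤ m`, the window of length `m` starting at `1` sees the `1`s at
`1, 1 + n, …`, that is `⌊m/n⌋ + 1 > m/n` of them, so its mean already exceeds `1/n`.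
-/

open Finset

noncomputable def discNorm (x : ℕ → ℝ) (p : ℝ) (n : ℕ) : ℝ :=
  ⨆ j : ℕ, ((1 / (n : ℝ)) * ∑ i ∈ Finset.range n, |x (j + i)| ^ p) ^ (1 / p)

open Function

theorem Function.Periodic.sum_range_add {M : Type*} [AddCancelCommMonoid M] {f : ℕ → M}
    {n : ℕ} (hf : Periodic f n) (j : ℕ) :
    ∑ i ∈ range n, f (j + i) = ∑ i ∈ range n, f i := by
  induction j with
  | zero => simp
  | succ j ih =>
    have hshift := (sum_range_succ' (fun i => f (j + i)) n).symm.trans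
      (sum_range_succ (fun i => f (j + i)) n)
    rw [ih, hf j] at hshift
    simpa only [add_assoc, add_comm 1] using add_right_cancel hshift

noncomputable def windowMean (x : ℕ → ℝ) (p : ℝ) (k j : ℕ) : ℝ :=
  (1 / (k : ℝ)) * ∑ i ∈ range k, |x (j + i)| ^ p

section DiscNorm

variable {x : ℕ → ℝ} {p : ℝ} {k : ℕ}

theorem discNorm_eq_iSup_windowMean :
    discNorm x p k = ⨆ j, windowMean x p k j ^ (1 / p) := rfl

theorem windowMean_nonneg (j : ℕ) : 0 ≤ windowMean x p k j := by
  unfold windowMean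
  positivity

theorem windowMean_le_rpow {C : ℝ} (hp : 0 ≤ p) (hx : ∀ i, |x i| ≤ C) (j : ℕ) :
    windowMean x p k j ≤ C ^ p := by
  have hC : 0 ≤ C := (abs_nonneg _).trans (hx 0)
  have hsum : ∑ i ∈ range k, |x (j + i)| ^ p ≤ k * C ^ p := by
    simpa using sum_le_card_nsmul (range k) (fun i => |x (j + i)| ^ p) (C ^ p)
      fun i _ => Real.rpow_le_rpow (abs_nonneg _) (hx (j + i)) hp
  calc windowMean x p k j ≤ (1 / (k : ℝ)) * (k * C ^ p) :=
        mul_le_mul_of_nonneg_left hsum (by positivity)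
    _ = (k / k : ℝ) * C ^ p := by ring
    _ ≤ C ^ p := mul_le_of_le_one_left (by positivity) (div_self_le_one _)

theorem discNorm_rpow_of_windowMean_eq {c : ℝ} (hc : 0 ≤ c) (hp : p ≠ 0)
    (h : ∀ j, windowMean x p k j = c) : discNorm x p k ^ p = c := by
  rw [discNorm_eq_iSup_windowMean]
  simp only [h, ciSup_const]
  rw [← Real.rpow_mul hc, one_div_mul_cancel hp, Real.rpow_one]

theorem windowMean_le_discNorm_rpow {C : ℝ} (hp : 0 < p) (hx : ∀ i, |x i| ≤ C) (j : ℕ) :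
    windowMean x p k j ≤ discNorm x p k ^ p := by
  have hbdd : BddAbove (Set.range fun j => windowMean x p k j ^ (1 / p)) := by
    refine ⟨C, ?_⟩
    rintro _ ⟨j, rfl⟩
    calc windowMean x p k j ^ (1 / p) ≤ (C ^ p) ^ (1 / p) :=
          Real.rpow_le_rpow (windowMean_nonneg j) (windowMean_le_rpow hp.le hx j) (by positivity)
      _ = C := by
          rw [← Real.rpow_mul ((abs_nonneg _).trans (hx 0)), mul_one_div_cancel hp.ne',
            Real.rpow_one]
  calc windowMean x p k j = (windowMean x p k j ^ (1 / p)) ^ p := by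
        rw [← Real.rpow_mul (windowMean_nonneg j), one_div_mul_cancel hp.ne', Real.rpow_one]
    _ ≤ discNorm x p k ^ p :=
        Real.rpow_le_rpow (Real.rpow_nonneg (windowMean_nonneg j) _) (le_ciSup hbdd j) hp.le

end DiscNorm

def combSeq (n : ℕ) (i : ℕ) : ℝ := if i % n = 1 % n then 1 else 0

section CombSeq

variable {n : ℕ}

theorem abs_combSeq_le_one (i : ℕ) : |combSeq n i| ≤ 1 := by
  unfold combSeq
  split_ifs <;> simp

theorem abs_combSeq_rpow {p : ℝ} (hp : p ≠ 0) (i : ℕ) : |combSeq n i| ^ p = combSeq n i := by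
  unfold combSeq
  split_ifs <;> simp [Real.zero_rpow hp]

theorem windowMean_combSeq {p : ℝ} (hp : p ≠ 0) (k j : ℕ) :
    windowMean (combSeq n) p k j = 1 / (k : ℝ) * ∑ i ∈ range k, combSeq n (j + i) := by
  simp only [windowMean, abs_combSeq_rpow hp]

theorem combSeq_periodic : Periodic (combSeq n) n := by
  intro i
  simp [combSeq]

theorem sum_range_combSeq (hn : 0 < n) : ∑ i ∈ range n, combSeq n i = 1 := by
  calc ∑ i ∈ range n, combSeq n i = ∑ i ∈ range n, if i = 1 % n then 1 else 0 :=
        sum_congr rfl fun i hi => by rw [combSeq, Nat.mod_eq_of_lt (mem_range.mp hi)]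
    _ = 1 := by simp [sum_ite_eq', Nat.mod_lt 1 hn]

theorem sum_range_combSeq_one_add (hn : 0 < n) {m : ℕ} (hm : ¬ n ∣ m) :
    ∑ i ∈ range m, combSeq n (1 + i) = (m / n + 1 : ℕ) := by
  have hcount : #{i ∈ range m | 1 + i ≡ 1 [MOD n]} = m / n + 1 := by
    simp only [Nat.add_modEq_left_iff, ← Nat.modEq_zero_iff_dvd,
      ← Nat.count_eq_card_filter_range, Nat.count_modEq_card m hn 0, Nat.zero_mod,
      Nat.pos_of_ne_zero (mt Nat.dvd_of_mod_eq_zero hm), if_true]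
  rw [← hcount]
  exact sum_boole _ _

end CombSeq

theorem stmt5 (n : ℕ) (hn : 1 ≤ n) (p : ℝ) (hp : 1 ≤ p)
    (x : ℕ → ℝ) (hxdef : ∀ i, x i = if i % n = 1 % n then 1 else 0) :
    discNorm x p n ^ p = 1 / (n : ℝ) ∧
      ∀ m : ℕ, 1 ≤ m → ¬ n ∣ m → 1 / (n : ℝ) < discNorm x p m ^ p := by
  obtain rfl : x = combSeq n := funext hxdef
  have hp0 : 0 < p := by linarith
  refine ⟨discNorm_rpow_of_windowMean_eq (by positivity) hp0.ne' fun j => ?_,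
    fun m _ hdvd => ?_⟩
  · rw [windowMean_combSeq hp0.ne', combSeq_periodic.sum_range_add, sum_range_combSeq hn, mul_one]
  · calc 1 / (n : ℝ) < 1 / (m : ℝ) * (m / n + 1 : ℕ) := by
          rw [div_mul_eq_mul_div, one_mul, div_lt_div_iff₀ (by positivity) (by positivity),
            one_mul]
          exact_mod_cast (mul_comm n _ ▸ Nat.lt_mul_div_succ m hn)
      _ = windowMean (combSeq n) p m 1 := by
          rw [windowMean_combSeq hp0.ne', sum_range_combSeq_one_add hn hdvd]
      _ ≤ discNorm (combSeq n) p m ^ p := windowMean_le_discNorm_rpow hp0 abs_combSeq_le_one 1
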